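/- Let w be an overlap-free binary word with |w| ≥ 16, whose Restivo–Salemi factorization is w = u·μ(y)·v with y overlap-free and u,v ∈ {ε, 0, 1, 00, 11}. If v = aa for some letter a, then neither w·0 nor w·1 is overlap-free. -/

import Mathlib

/-- Thue–Morse morphism: μ(0)=01, μ(1)=10, encoding 0 = false, 1 = true. -/
def mu (w : List Bool) : List Bool := w.flatMap fun b => [b, !b]

/-- A word is an overlap if it has the form a·x·a·x·a for a letter a. -/
def IsOverlap (w : List Bool) : Prop :=
  ∃ (a : Bool) (x : List Bool), w = [a] ++ x ++ [a] ++ x ++ [a]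

/-- A word contains an overlap as a factor. -/
def HasOverlap (w : List Bool) : Prop := ∃ f, f <:+: w ∧ IsOverlap f

/-- A word is overlap-free if no factor is an overlap. -/
def OverlapFree (w : List Bool) : Prop := ∀ f, f <:+: w → ¬ IsOverlap f

/-
Since `|y| ≥ 2`, the word `w` ends in `μ(db)·aa = d d̄ b b̄ a a`. Overlap-freeness forces
`b = a` (else `b̄aa = aaa`) and then `d = ā` (else `aāaāa`), so `w` ends in `āaaāaa`;
appending `a` creates `aaa`, appending `ā` creates the overlap `ā·aa·ā·aa·ā`.
-/

theorem mu_append (s t : List Bool) : mu (s ++ t) = mu s ++ mu t := by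
  simp [mu]

theorem length_mu (l : List Bool) : (mu l).length = 2 * l.length := by
  induction l with
  | nil => rfl
  | cons b l ih =>
    simp only [mu, List.flatMap_cons, List.length_append, List.length_cons, List.length_nil] at ih ⊢
    omega

theorem OverlapFree.of_infix {s w : List Bool} (hw : OverlapFree w) (hs : s <:+: w) :
    OverlapFree s :=
  fun f hf => hw f (hf.trans hs)

theorem exists_eq_append_pair {α : Type*} {l : List α} (hl : 2 ≤ l.length) :
    ∃ t d b, l = t ++ [d, b] := by
  obtain ⟨d, b, hdb⟩ :=
    List.length_eq_two.mp (show (l.drop (l.length - 2)).length = 2 by simp; omega)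
  exact ⟨l.take (l.length - 2), d, b, by rw [← hdb, List.take_append_drop]⟩

theorem eq_of_overlapFree_mu_pair_append {d b a : Bool}
    (h : OverlapFree (mu [d, b] ++ [a, a])) : d = !a ∧ b = a := by
  have hb : b = a := by
    by_contra hb
    have hcube : [a, a, a] <:+: mu [d, b] ++ [a, a] :=
      ⟨[d, !d, b], [], by cases a <;> cases b <;> simp_all [mu]⟩
    exact h _ hcube ⟨a, [], rfl⟩
  subst hb
  refine ⟨?_, rfl⟩
  by_contra hd
  have hoverlap : [b, !b, b, !b, b] <:+: mu [d, b] ++ [b, b] :=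
    ⟨[], [b], by cases b <;> cases d <;> simp_all [mu]⟩
  exact h _ hoverlap ⟨b, [!b], rfl⟩

theorem not_overlapFree_square_append (a c : Bool) :
    ¬ OverlapFree ([!a, a, a, !a, a, a] ++ [c]) := by
  intro h
  by_cases hc : c = a
  · exact h [a, a, a] ⟨[!a, a, a, !a], [], by simp [hc]⟩ ⟨a, [], rfl⟩
  · have hc : c = !a := by cases a <;> cases c <;> simp_all
    exact h _ (List.infix_refl _) ⟨!a, [a, a], by simp [hc]⟩

theorem stmt_9_general (w u v y : List Bool) (a : Bool)
    (hof : OverlapFree w) (hlen : 16 ≤ w.length)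
    (hfac : w = u ++ mu y ++ v)
    (hu : u ∈ [([] : List Bool), [false], [true], [false, false], [true, true]])
    (ha : v = [a, a]) :
    ∀ c : Bool, ¬ OverlapFree (w ++ [c]) := by
  intro c
  have hul : u.length ≤ 2 := by
    simp only [List.mem_cons, List.not_mem_nil, or_false] at hu
    rcases hu with rfl | rfl | rfl | rfl | rfl <;> simp
  have hyl : 2 ≤ y.length := by
    have := congrArg List.length hfac
    simp only [List.length_append, length_mu, ha, List.length_cons, List.length_nil] at this
    omega
  obtain ⟨t, d, b, rfl⟩ := exists_eq_append_pair hyl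
  have hsuf : mu [d, b] ++ [a, a] <:+: w := ⟨u ++ mu t, [], by simp [hfac, ha, mu_append]⟩
  obtain ⟨rfl, rfl⟩ := eq_of_overlapFree_mu_pair_append (hof.of_infix hsuf)
  have htail : [!b, b, b, !b, b, b] ++ [c] <:+: w ++ [c] :=
    ⟨u ++ mu t, [], by simp [hfac, ha, mu]⟩
  exact fun hc => not_overlapFree_square_append b c (hc.of_infix htail)

theorem stmt_9 (w u v y : List Bool) (a : Bool)
    (hof : OverlapFree w) (hlen : 16 ≤ w.length)
    (hfac : w = u ++ mu y ++ v) (hy : OverlapFree y)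
    (hu : u ∈ [([] : List Bool), [false], [true], [false, false], [true, true]])
    (hv : v ∈ [([] : List Bool), [false], [true], [false, false], [true, true]])
    (ha : v = [a, a]) :
    ∀ c : Bool, ¬ OverlapFree (w ++ [c]) :=
  stmt_9_general w u v y a hof hlen hfac hu ha
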